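/- Let W be a finite-dimensional real vector space, V a finite set, and φ : V → W a map. For any two linear functionals f, g on W there exists a linear functional h on W such that for every v ∈ V: if f(φ v) ≠ 0 then sign(h(φ v)) = sign(f(φ v)), and if f(φ v) = 0 then sign(h(φ v)) = sign(g(φ v)). (Realizability of the composition of two realizable covectors; h can be taken of the form f + δ·g for all sufficiently small δ > 0.) -/
import Mathlib

lemma sign_add_of_abs_lt {a b : ℝ} (h : |b| < |a|) :
    SignType.sign (a + b) = SignType.sign a := by
  rcases lt_trichotomy a 0 with ha | ha | ha
  · have : a + b < 0 := by
      have := abs_lt.mp h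
      linarith [abs_of_neg ha]
    simp [sign_neg this, sign_neg ha]
  · rw [ha, abs_zero] at h; exact absurd h (not_lt.mpr (abs_nonneg b))
  · have : 0 < a + b := by
      have := abs_lt.mp h
      linarith [abs_of_pos ha]
    simp [sign_pos this, sign_pos ha]

/-- Realizability of the composition of two realizable covectors: for linear
functionals `f, g` on `W` there is a functional `h` whose sign pattern on the
configuration `φ` is the composition of those of `f` and `g`. -/
theorem exists_functional_realizing_composition
    (V : Type*) [Fintype V] (W : Type*) [AddCommGroup W] [Module ℝ W]
    [FiniteDimensional ℝ W] (φ : V → W) (f g : W →ₗ[ℝ] ℝ) :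
    ∃ h : W →ₗ[ℝ] ℝ, ∀ v : V,
      (f (φ v) ≠ 0 → SignType.sign (h (φ v)) = SignType.sign (f (φ v))) ∧
      (f (φ v) = 0 → SignType.sign (h (φ v)) = SignType.sign (g (φ v))) := by
  classical
  set S : Finset V := Finset.univ.filter (fun v => f (φ v) ≠ 0) with hS
  set c : V → ℝ := fun v => |f (φ v)| / (|g (φ v)| + 1) with hc
  set δ : ℝ := if hne : S.Nonempty then S.inf' hne c else 1 with hδ
  have hδpos : 0 < δ := by
    rw [hδ]
    split_ifs with hne
    · apply (Finset.lt_inf'_iff hne).mpr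
      intro v hv
      have hf : f (φ v) ≠ 0 := (Finset.mem_filter.mp hv).2
      have : 0 < |f (φ v)| := abs_pos.mpr hf
      positivity
    · norm_num
  refine ⟨f + δ • g, fun v => ⟨?_, ?_⟩⟩
  · intro hf
    have hvS : v ∈ S := by simp [hS, hf]
    have hne : S.Nonempty := ⟨v, hvS⟩
    have hδle : δ ≤ c v := by
      rw [hδ, dif_pos hne]; exact Finset.inf'_le c hvS
    have habs : |δ * g (φ v)| < |f (φ v)| := by
      rw [abs_mul, abs_of_pos hδpos]
      calc δ * |g (φ v)| ≤ c v * |g (φ v)| := by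
            apply mul_le_mul_of_nonneg_right hδle (abs_nonneg _)
        _ < |f (φ v)| := by
            rw [hc]
            have h1 : 0 < |g (φ v)| + 1 := by positivity
            rw [div_mul_eq_mul_div, div_lt_iff₀ h1]
            have : 0 < |f (φ v)| := abs_pos.mpr hf
            nlinarith
    simpa using sign_add_of_abs_lt habs
  · intro hf
    have : (f + δ • g) (φ v) = δ * g (φ v) := by simp [hf]
    rw [this, sign_mul, sign_pos hδpos, one_mul]
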